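/- Let G be a simple vertex-transitive graph of odd order that contains a quadrangle (4-cycle). Then every vertex of G is contained in the same number m of quadrangles, and m is divisible by 4. -/

import Mathlib

open SimpleGraph

/-- `Q` is the edge set of a quadrangle (4-cycle) of `G`. -/
def IsQuadrangle {V : Type*} (G : SimpleGraph V) (Q : Set (Sym2 V)) : Prop :=
  ∃ a b c d : V, [a, b, c, d].Nodup ∧
    G.Adj a b ∧ G.Adj b c ∧ G.Adj c d ∧ G.Adj d a ∧
    Q = {s(a, b), s(b, c), s(c, d), s(d, a)}

/-!
An automorphism carries the quadrangles through `v` injectively to quadrangles through its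
image, so by vertex-transitivity every vertex lies in the same number `m` of quadrangles.
Counting incidences between vertices and quadrangles, each quadrangle having four vertices,
gives `|V| * m = 4 * #quadrangles`; as `|V|` is odd, `4 ∣ m`.
-/

open Finset

section

variable {V W : Type*} {G : SimpleGraph V} {H : SimpleGraph W}

def quadranglesAt (G : SimpleGraph V) (v : V) : Set (Set (Sym2 V)) :=
  {Q | IsQuadrangle G Q ∧ ∃ e ∈ Q, v ∈ e}

theorem IsQuadrangle.map (f : G ↪g H) {Q : Set (Sym2 V)} (hQ : IsQuadrangle G Q) :
    IsQuadrangle H (Sym2.map f '' Q) := by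
  obtain ⟨a, b, c, d, hn, hab, hbc, hcd, hda, rfl⟩ := hQ
  refine ⟨f a, f b, f c, f d, by simpa using hn.map f.injective, f.map_adj_iff.2 hab,
    f.map_adj_iff.2 hbc, f.map_adj_iff.2 hcd, f.map_adj_iff.2 hda, ?_⟩
  simp [Set.image_insert_eq]

theorem IsQuadrangle.ncard_vertices {Q : Set (Sym2 V)} (hQ : IsQuadrangle G Q) :
    {v | ∃ e ∈ Q, v ∈ e}.ncard = 4 := by
  classical
  obtain ⟨a, b, c, d, hn, -, -, -, -, rfl⟩ := hQ
  have hvertices : {v | ∃ e ∈ ({s(a, b), s(b, c), s(c, d), s(d, a)} : Set (Sym2 V)), v ∈ e} =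
      ↑[a, b, c, d].toFinset := by
    ext v; simp; tauto
  rw [hvertices, Set.ncard_coe_finset, List.toFinset_card_of_nodup hn]
  rfl

theorem mapsTo_quadranglesAt (f : G ↪g H) (v : V) :
    Set.MapsTo (Sym2.map f '' ·) (quadranglesAt G v) (quadranglesAt H (f v)) :=
  fun _ ⟨hQ, e, he, hv⟩ =>
    ⟨hQ.map f, Sym2.map f e, Set.mem_image_of_mem _ he, Sym2.mem_map.2 ⟨v, hv, rfl⟩⟩

theorem ncard_quadranglesAt_le [Finite W] (f : G ↪g H) (v : V) :
    (quadranglesAt G v).ncard ≤ (quadranglesAt H (f v)).ncard :=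
  Set.ncard_le_ncard_of_injOn _ (mapsTo_quadranglesAt f v)
    (Set.image_injective.2 (Sym2.map.injective f.injective)).injOn

theorem ncard_quadranglesAt_eq_of_transitive [Finite V]
    (hvt : ∀ x y : V, ∃ φ : G ≃g G, φ x = y) (v w : V) :
    (quadranglesAt G v).ncard = (quadranglesAt G w).ncard := by
  obtain ⟨φ, rfl⟩ := hvt v w
  obtain ⟨ψ, hψ⟩ := hvt (φ v) v
  refine le_antisymm (ncard_quadranglesAt_le φ.toEmbedding v) ?_
  simpa [hψ] using ncard_quadranglesAt_le ψ.toEmbedding (φ v)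

theorem card_mul_eq_ncard_quadrangles_mul_four [Fintype V] {m : ℕ}
    (hm : ∀ v, (quadranglesAt G v).ncard = m) :
    Fintype.card V * m = {Q | IsQuadrangle G Q}.ncard * 4 := by
  classical
  let _ : Fintype (Set (Sym2 V)) := Fintype.ofFinite _
  rw [Set.ncard_eq_toFinset_card', ← card_univ]
  refine card_mul_eq_card_mul (fun v Q => ∃ e ∈ Q, v ∈ e) (fun v _ => ?_) (fun Q hQ => ?_)
  · rw [← hm v, ← Set.ncard_coe_finset, coe_bipartiteAbove]
    simp [quadranglesAt]
  · rw [← (Set.mem_toFinset.1 hQ).ncard_vertices, ← Set.ncard_coe_finset, coe_bipartiteBelow]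
    simp

end

theorem quadrangles_per_vertex_general {V : Type*} [Fintype V] (G : SimpleGraph V)
    (hvt : ∀ x y : V, ∃ φ : G ≃g G, φ x = y)
    (hodd : Odd (Fintype.card V)) :
    ∃ m : ℕ,
      (∀ v : V,
        {Q : Set (Sym2 V) | IsQuadrangle G Q ∧ ∃ e ∈ Q, v ∈ e}.ncard = m) ∧
      4 ∣ m := by
  obtain ⟨v₀⟩ := Fintype.card_pos_iff.mp hodd.pos
  have hm : ∀ v, (quadranglesAt G v).ncard = (quadranglesAt G v₀).ncard :=
    fun v => ncard_quadranglesAt_eq_of_transitive hvt v v₀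
  refine ⟨_, hm, ?_⟩
  have hcop : Nat.Coprime 4 (Fintype.card V) := (Nat.coprime_two_left.2 hodd).pow_left 2
  exact hcop.dvd_of_dvd_mul_left
    ⟨_, (card_mul_eq_ncard_quadrangles_mul_four hm).trans (mul_comm _ _)⟩

/-- In a vertex-transitive odd graph containing a quadrangle, every vertex lies in the same
number `m` of quadrangles, and `4 ∣ m`. -/
theorem quadrangles_per_vertex {V : Type*} [Fintype V] (G : SimpleGraph V)
    (hvt : ∀ x y : V, ∃ φ : G ≃g G, φ x = y)
    (hodd : Odd (Fintype.card V))
    (hquad : ∃ Q : Set (Sym2 V), IsQuadrangle G Q) :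
    ∃ m : ℕ,
      (∀ v : V,
        {Q : Set (Sym2 V) | IsQuadrangle G Q ∧ ∃ e ∈ Q, v ∈ e}.ncard = m) ∧
      4 ∣ m :=
  quadrangles_per_vertex_general G hvt hodd
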